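/- For every nonnegative integer n, the function F_n(x) = Σ_{m=0}^n ((−n)_m (1/2)_m / ((1)_m m!)) x^m is monotone non-increasing on the interval [0,1], and for every x ∈ [0,1] one has (1/2)_n/n! ≤ F_n(x) ≤ 1; moreover F_n(0) = 1 and F_n(1) = (1/2)_n/n!. -/

import Mathlib

open Real Finset

/-- Pochhammer symbol `(a)_n = a (a+1) ⋯ (a+n-1)`. -/
noncomputable def poch (a : ℝ) (n : ℕ) : ℝ := ∏ i ∈ Finset.range n, (a + i)

/-- Terminating Gauss hypergeometric function `₂F₁(-n, 1/2; 1; x)`. -/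
noncomputable def F2F1 (n : ℕ) (x : ℝ) : ℝ :=
  ∑ m ∈ Finset.range (n + 1),
    poch (-(n : ℝ)) m * poch (1/2) m / (poch 1 m * (Nat.factorial m : ℝ)) * x ^ m

/-!
Expanding `(1 - x sin² θ)ⁿ` binomially and using Wallis' integrals
`∫₀^π sin^{2m} θ dθ = π (1/2)_m / m!` gives the Euler-type representation
`F_n(x) = π⁻¹ ∫₀^π (1 - x sin² θ)ⁿ dθ`. On `[0, 1]` the integrand is nonnegative and
decreasing in `x`, so `F_n` is antitone there; its values at the endpoints are
`π⁻¹ ∫₀^π 1 = 1` and `π⁻¹ ∫₀^π cos^{2n} θ dθ = (1/2)_n / n!`.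
-/

lemma poch_one_eq_factorial (m : ℕ) : poch 1 m = m.factorial := by
  induction m with
  | zero => simp [poch]
  | succ k ih =>
    rw [poch, prod_range_succ, ← poch, ih]
    push_cast [Nat.factorial_succ]
    ring

lemma poch_neg_natCast (n : ℕ) {m : ℕ} (hm : m ≤ n) :
    poch (-(n : ℝ)) m = (-1) ^ m * n.choose m * m.factorial := by
  induction m with
  | zero => simp [poch]
  | succ k ih =>
    have hk : k ≤ n := Nat.le_of_succ_le hm
    have hchoose : ((n.choose (k + 1) * (k + 1) : ℕ) : ℝ) = (n.choose k * (n - k) : ℕ) :=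
      congrArg _ (Nat.choose_succ_right_eq n k)
    push_cast [Nat.cast_sub hk] at hchoose
    rw [poch, prod_range_succ, ← poch, ih hk]
    push_cast [Nat.factorial_succ]
    linear_combination ((-1 : ℝ) ^ k * k.factorial) * hchoose

lemma prod_range_odd_div_even (m : ℕ) :
    ∏ i ∈ range m, (2 * (i : ℝ) + 1) / (2 * i + 2) = poch (1 / 2) m / m.factorial := by
  rw [← poch_one_eq_factorial, poch, poch, ← prod_div_distrib]
  refine prod_congr rfl fun i _ => ?_
  field_simp
  ring

lemma integral_sin_pow_two_mul (m : ℕ) :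
    ∫ θ in 0..π, sin θ ^ (2 * m) = π * (poch (1 / 2) m / m.factorial) := by
  rw [integral_sin_pow_even, prod_range_odd_div_even]

lemma integral_cos_pow_two_mul (m : ℕ) :
    ∫ θ in 0..π, cos θ ^ (2 * m) = π * (poch (1 / 2) m / m.factorial) := by
  rw [← prod_range_odd_div_even]
  induction m with
  | zero => simp
  | succ k ih =>
    rw [prod_range_succ_comm, mul_left_comm, ← ih, Nat.mul_succ, integral_cos_pow]
    norm_cast
    field_simp
    simp

lemma intervalIntegrable_one_sub_mul_sin_sq_pow (n : ℕ) (x a b : ℝ) :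
    IntervalIntegrable (fun θ ↦ (1 - x * sin θ ^ 2) ^ n) MeasureTheory.volume a b :=
  Continuous.intervalIntegrable (by fun_prop) a b

lemma F2F1_eq_integral (n : ℕ) (x : ℝ) :
    F2F1 n x = π⁻¹ * ∫ θ in 0..π, (1 - x * sin θ ^ 2) ^ n := by
  have binomial : ∀ θ : ℝ, (1 - x * sin θ ^ 2) ^ n =
      ∑ m ∈ range (n + 1), (n.choose m : ℝ) * (-x) ^ m * sin θ ^ (2 * m) := by
    intro θ
    rw [sub_eq_add_neg, add_comm, add_pow]
    refine sum_congr rfl fun m _ ↦ ?_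
    rw [one_pow, pow_mul, ← neg_mul, mul_pow]
    ring
  simp_rw [binomial]
  rw [intervalIntegral.integral_finsetSum
    fun m _ ↦ Continuous.intervalIntegrable (by fun_prop) _ _, mul_sum, F2F1]
  refine sum_congr rfl fun m hm ↦ ?_
  rw [intervalIntegral.integral_const_mul, integral_sin_pow_two_mul,
    poch_neg_natCast n (Nat.lt_succ_iff.mp (mem_range.mp hm)), poch_one_eq_factorial]
  have : (m.factorial : ℝ) ≠ 0 := by positivity
  field_simp [pi_ne_zero]
  rw [neg_pow]
  ring

lemma F2F1_antitoneOn (n : ℕ) : AntitoneOn (F2F1 n) (Set.Icc 0 1) := by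
  intro x hx y hy hxy
  rw [F2F1_eq_integral, F2F1_eq_integral]
  refine mul_le_mul_of_nonneg_left ?_ (inv_nonneg.mpr pi_pos.le)
  refine intervalIntegral.integral_mono_on pi_pos.le (intervalIntegrable_one_sub_mul_sin_sq_pow ..)
    (intervalIntegrable_one_sub_mul_sin_sq_pow ..) fun θ _ ↦ ?_
  have hs₀ : 0 ≤ sin θ ^ 2 := sq_nonneg _
  have hs₁ : sin θ ^ 2 ≤ 1 := sin_sq_le_one θ
  exact pow_le_pow_left₀ (by nlinarith [hy.2]) (by nlinarith [hx.1]) n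

lemma F2F1_zero_right (n : ℕ) : F2F1 n 0 = 1 := by
  simp [F2F1_eq_integral, pi_ne_zero]

lemma F2F1_one_right (n : ℕ) : F2F1 n 1 = poch (1 / 2) n / n.factorial := by
  have hcos : ∀ θ : ℝ, (1 - 1 * sin θ ^ 2) ^ n = cos θ ^ (2 * n) := fun θ ↦ by
    rw [one_mul, ← cos_sq', pow_mul]
  simp_rw [F2F1_eq_integral, hcos, integral_cos_pow_two_mul]
  field_simp [pi_ne_zero]

theorem stmt4 (n : ℕ) :
    AntitoneOn (F2F1 n) (Set.Icc 0 1)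
    ∧ (∀ x ∈ Set.Icc (0:ℝ) 1,
        poch (1/2) n / (Nat.factorial n : ℝ) ≤ F2F1 n x ∧ F2F1 n x ≤ 1)
    ∧ F2F1 n 0 = 1
    ∧ F2F1 n 1 = poch (1/2) n / (Nat.factorial n : ℝ) := by
  have hanti := F2F1_antitoneOn n
  have h₀ : (0 : ℝ) ∈ Set.Icc 0 1 := ⟨le_rfl, zero_le_one⟩
  have h₁ : (1 : ℝ) ∈ Set.Icc 0 1 := ⟨zero_le_one, le_rfl⟩
  refine ⟨hanti, fun x hx ↦ ⟨?_, ?_⟩, F2F1_zero_right n, F2F1_one_right n⟩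
  · rw [← F2F1_one_right]
    exact hanti hx h₁ hx.2
  · rw [← F2F1_zero_right n]
    exact hanti h₀ hx hx.1
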